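/- arXiv:2603.15978 — 2 statements merged into one kernel-verified Lean document; each statement's English description precedes it below -/
import Mathlib

section
/- Lazy insertion: let H' be obtained from H by adding hyperedge e = (S, T). Then cl_{H'}(A) = cl_H(A) if and only if S ⊄ cl_{H'}(A) or T ⊆ cl_H(A). -/
/-- Capability closure: least superset of `A` closed under every hyperedge in `E`. -/
def cl {V : Type*} (E : Set (Set V × Set V)) (A : Set V) : Set V :=
  ⋂₀ {C | A ⊆ C ∧ ∀ e ∈ E, e.1 ⊆ C → e.2 ⊆ C}

lemma cl_mem {V : Type*} (E : Set (Set V × Set V)) (A : Set V) :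
    A ⊆ cl E A ∧ ∀ e ∈ E, e.1 ⊆ cl E A → e.2 ⊆ cl E A := by
  constructor
  · intro x hx C hC; exact hC.1 hx
  · intro e he hsub x hx C hC
    exact hC.2 e he (fun y hy => hsub hy C hC) hx

lemma cl_le {V : Type*} {E : Set (Set V × Set V)} {A C : Set V}
    (h1 : A ⊆ C) (h2 : ∀ e ∈ E, e.1 ⊆ C → e.2 ⊆ C) : cl E A ⊆ C :=
  Set.sInter_subset_of_mem ⟨h1, h2⟩

lemma cl_mono {V : Type*} {E E' : Set (Set V × Set V)} (A : Set V)
    (h : E ⊆ E') : cl E A ⊆ cl E' A :=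
  cl_le (cl_mem E' A).1 (fun e he => (cl_mem E' A).2 e (h he))

theorem lazy_insertion {V : Type*} (E : Set (Set V × Set V)) (S T : Set V)
    (A : Set V) :
    cl (E ∪ {(S, T)}) A = cl E A ↔
      (¬S ⊆ cl (E ∪ {(S, T)}) A ∨ T ⊆ cl E A) := by
  have hsub : cl E A ⊆ cl (E ∪ {(S, T)}) A := cl_mono A Set.subset_union_left
  constructor
  · intro heq
    by_cases hS : S ⊆ cl (E ∪ {(S, T)}) A
    · right
      rw [← heq]
      exact (cl_mem _ A).2 (S, T) (Or.inr rfl) hS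
    · exact Or.inl hS
  · rintro (hS | hT)
    · refine le_antisymm ?_ hsub
      refine cl_le (cl_mem E A).1 ?_
      rintro e (he | he)
      · exact (cl_mem E A).2 e he
      · rcases he with rfl
        intro hSE
        exact absurd (hSE.trans hsub) hS
    · refine le_antisymm ?_ hsub
      refine cl_le (cl_mem E A).1 ?_
      rintro e (he | he)
      · exact (cl_mem E A).2 e he
      · rcases he with rfl
        exact fun _ => hT
end

section
/- Active insertion formula: let H' be obtained from H = (V, ℱ) by adding hyperedge (S, T), and suppose S ⊆ cl_H(A). Then cl_{H'}(A) = cl_{H'}(cl_H(A) ∪ T), and moreover cl_H(A ∪ T) ⊆ cl_{H'}(A). -/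
lemma cl_subset_of {V : Type*} (E : Set (Set V × Set V)) (A C : Set V)
    (hA : A ⊆ C) (hC : ∀ e ∈ E, e.1 ⊆ C → e.2 ⊆ C) : cl E A ⊆ C :=
  Set.sInter_subset_of_mem ⟨hA, hC⟩

lemma subset_cl {V : Type*} (E : Set (Set V × Set V)) (A : Set V) : A ⊆ cl E A := by
  intro x hx
  exact fun C hC => hC.1 hx

lemma cl_closed {V : Type*} (E : Set (Set V × Set V)) (A : Set V) :
    ∀ e ∈ E, e.1 ⊆ cl E A → e.2 ⊆ cl E A := by
  intro e he h1 x hx C hC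
  exact hC.2 e he (fun y hy => h1 hy C hC) hx

theorem active_insertion {V : Type*} (E : Set (Set V × Set V)) (S T : Set V)
    (A : Set V) (hS : S ⊆ cl E A) :
    cl (E ∪ {(S, T)}) A = cl (E ∪ {(S, T)}) (cl E A ∪ T) ∧
    cl E (A ∪ T) ⊆ cl (E ∪ {(S, T)}) A := by
  set E' := E ∪ {(S, T)} with hE'
  have hEsub : E ⊆ E' := Set.subset_union_left
  have hclE_sub : cl E A ⊆ cl E' A :=
    cl_subset_of E A (cl E' A) (subset_cl E' A)
      (fun e he => cl_closed E' A e (hEsub he))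
  have hT_sub : T ⊆ cl E' A :=
    cl_closed E' A (S, T) (Or.inr rfl) (fun x hx => hclE_sub (hS hx))
  constructor
  · apply Set.Subset.antisymm
    · exact cl_subset_of E' A _
        (fun x hx => subset_cl E' _ (Or.inl (subset_cl E A hx)))
        (cl_closed E' _)
    · exact cl_subset_of E' _ _ (Set.union_subset hclE_sub hT_sub) (cl_closed E' A)
  · exact cl_subset_of E _ _ (Set.union_subset (subset_cl E' A) hT_sub)
      (fun e he => cl_closed E' A e (hEsub he))
end
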